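/- arXiv:2208.12145 — 4 statements merged into one kernel-verified Lean document; each statement's English description precedes it below -/
import Mathlib

section
/- Let (X, d) be a metric space and let ω : [0,1] → X be a curve such that for all real numbers s, t with 0 < s < t ≤ 1 it holds that d(ω(0), ω(t))²/t = d(ω(0), ω(s))²/s + d(ω(s), ω(t))²/(t − s). Then ω is a constant-speed geodesic, i.e., d(ω(s), ω(t)) = |t − s| · d(ω(0), ω(1)) for all s, t ∈ [0,1]. -/
/-- Key algebraic/metric lemma: the equality case. -/
lemma csg_key {X : Type*} [MetricSpace X] (ω : ℝ → X)
    (h : ∀ s t : ℝ, 0 < s → s < t → t ≤ 1 →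
      dist (ω 0) (ω t) ^ 2 / t
        = dist (ω 0) (ω s) ^ 2 / s + dist (ω s) (ω t) ^ 2 / (t - s))
    {s t : ℝ} (hs : 0 < s) (hst : s < t) (ht : t ≤ 1) :
    dist (ω 0) (ω s) * t = s * dist (ω 0) (ω t)
      ∧ dist (ω s) (ω t) * t = (t - s) * dist (ω 0) (ω t) := by
  set a := dist (ω 0) (ω s) with ha
  set b := dist (ω s) (ω t) with hb
  set D := dist (ω 0) (ω t) with hD
  have h0 := h s t hs hst ht
  have hts : 0 < t - s := by linarith
  have htpos : 0 < t := by linarith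
  have heq : D ^ 2 * (s * (t - s)) = t * (a ^ 2 * (t - s) + b ^ 2 * s) := by
    field_simp at h0
    nlinarith [h0]
  have htri : D ≤ a + b := dist_triangle (ω 0) (ω s) (ω t)
  have hD0 : 0 ≤ D := dist_nonneg
  have ha0 : 0 ≤ a := dist_nonneg
  have hb0 : 0 ≤ b := dist_nonneg
  have hsq : (a * (t - s) - b * s) ^ 2 ≤ 0 := by
    nlinarith [mul_le_mul htri htri hD0 (by linarith : (0:ℝ) ≤ a + b),
      mul_pos hs hts]
  have hzero : a * (t - s) = b * s := by nlinarith [sq_nonneg (a * (t - s) - b * s)]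
  -- from heq and hzero: D^2 * s^2 = a^2 * t^2
  have h2 : D ^ 2 * s ^ 2 * (t - s) = a ^ 2 * t ^ 2 * (t - s) := by
    linear_combination s * heq - t * (b * s + a * (t - s)) * hzero
  have hD2 : D ^ 2 * s ^ 2 = a ^ 2 * t ^ 2 := mul_right_cancel₀ (ne_of_gt hts) h2
  have hDa : D * s = a * t := by
    nlinarith [hD2, mul_nonneg hD0 hs.le, mul_nonneg ha0 htpos.le]
  constructor
  · linarith
  · -- b * t = (t - s) * D : from a(t-s)=bs and Ds = at
    have h3 : b * t * s = (t - s) * D * s := by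
      linear_combination (-t) * hzero + (-(t - s)) * hDa
    have := mul_right_cancel₀ (ne_of_gt hs) h3
    linarith

/-- A curve in a metric space satisfying the additivity identity for squared
distances along restrictions is a constant-speed geodesic. -/
theorem constant_speed_geodesic_of_squared_distance_additivity
    {X : Type*} [MetricSpace X] (ω : ℝ → X)
    (h : ∀ s t : ℝ, 0 < s → s < t → t ≤ 1 →
      dist (ω 0) (ω t) ^ 2 / t
        = dist (ω 0) (ω s) ^ 2 / s + dist (ω s) (ω t) ^ 2 / (t - s)) :
    ∀ s ∈ Set.Icc (0 : ℝ) 1, ∀ t ∈ Set.Icc (0 : ℝ) 1,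
      dist (ω s) (ω t) = |t - s| * dist (ω 0) (ω 1) := by
  set c := dist (ω 0) (ω 1) with hc
  have hA : ∀ t : ℝ, 0 < t → t ≤ 1 → dist (ω 0) (ω t) = t * c := by
    intro t ht ht1
    rcases eq_or_lt_of_le ht1 with rfl | hlt
    · simp [hc]
    · have := (csg_key ω h ht hlt le_rfl).1
      simpa using this
  have hB : ∀ s t : ℝ, 0 ≤ s → s < t → t ≤ 1 →
      dist (ω s) (ω t) = (t - s) * c := by
    intro s t hs hst ht1
    rcases eq_or_lt_of_le hs with rfl | hs'
    · simpa using hA t hst ht1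
    · have hk := (csg_key ω h hs' hst ht1).2
      have hDt : dist (ω 0) (ω t) = t * c := hA t (lt_trans hs' hst) ht1
      have htpos : 0 < t := lt_trans hs' hst
      rw [hDt] at hk
      have : dist (ω s) (ω t) * t = ((t - s) * c) * t := by linarith [hk]
      exact mul_right_cancel₀ (ne_of_gt htpos) this
  rintro s ⟨hs0, hs1⟩ t ⟨ht0, ht1⟩
  rcases lt_trichotomy s t with hlt | rfl | hgt
  · rw [hB s t hs0 hlt ht1, abs_of_pos (by linarith : (0:ℝ) < t - s)]
  · simp
  · rw [dist_comm, hB t s ht0 hgt hs1, abs_of_neg (by linarith : t - s < 0)]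
    ring
end

section
/- Let X be a real topological vector space and let E, F : X → ℝ be convex and lower semicontinuous functions such that the set U := argmin(E) of global minimizers of E is nonempty. Let (γₙ) be a sequence of positive real numbers with γₙ → 0, and for each n let uₙ be a global minimizer of E + γₙ F. If u* is a cluster point of the sequence (uₙ) (i.e., some subsequence of (uₙ) converges to u*), then u* ∈ U and F(u*) ≤ F(u) for all u ∈ U; that is, u* is a solution of the problem min_{u ∈ U} F(u). -/
lemma lsc_le_of_eventually_le {X : Type*} [TopologicalSpace X] {f : X → ℝ}
    (hf : LowerSemicontinuous f) {v : ℕ → X} {x : X}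
    (hv : Filter.Tendsto v Filter.atTop (nhds x)) {c : ℝ}
    (h : ∀ᶠ n in Filter.atTop, f (v n) ≤ c) : f x ≤ c := by
  by_contra hc
  push_neg at hc
  obtain ⟨n, h1, h2⟩ := (h.and (hv.eventually (hf x c hc))).exists
  linarith

/-- Proposition 4.1 of the paper: as the penalty parameter tends to zero, any
cluster point of the minimizers of `E + γₙ F` minimizes `F` over the set of
global minimizers of `E`. -/
theorem cluster_point_of_penalized_minimizers
    {X : Type*} [AddCommGroup X] [Module ℝ X] [TopologicalSpace X]
    [IsTopologicalAddGroup X] [ContinuousSMul ℝ X]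
    (E F : X → ℝ)
    (hEconv : ConvexOn ℝ Set.univ E) (hFconv : ConvexOn ℝ Set.univ F)
    (hElsc : LowerSemicontinuous E) (hFlsc : LowerSemicontinuous F)
    (hU : ∃ u₀, ∀ v, E u₀ ≤ E v)
    (γ : ℕ → ℝ) (hγpos : ∀ n, 0 < γ n)
    (hγ : Filter.Tendsto γ Filter.atTop (nhds 0))
    (u : ℕ → X)
    (hmin : ∀ n v, E (u n) + γ n * F (u n) ≤ E v + γ n * F v)
    (ustar : X)
    (hcluster : ∃ φ : ℕ → ℕ, StrictMono φ ∧
      Filter.Tendsto (u ∘ φ) Filter.atTop (nhds ustar)) :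
    (∀ v, E ustar ≤ E v) ∧ ∀ v, (∀ w, E v ≤ E w) → F ustar ≤ F v := by
  obtain ⟨u₀, hu₀⟩ := hU
  obtain ⟨φ, hφ, htend⟩ := hcluster
  have hγφ : Filter.Tendsto (fun n => γ (φ n)) Filter.atTop (nhds 0) :=
    hγ.comp hφ.tendsto_atTop
  constructor
  · intro v
    have key : E ustar ≤ E u₀ := by
      by_contra h
      push_neg at h
      set c := (E u₀ + E ustar) / 2 with hcdef
      have hc1 : E u₀ < c := by rw [hcdef]; linarith
      have hc2 : c < E ustar := by rw [hcdef]; linarith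
      have hE : ∀ᶠ n in Filter.atTop, c < E ((u ∘ φ) n) :=
        htend.eventually (hElsc ustar c hc2)
      have hF : ∀ᶠ n in Filter.atTop, F ustar - 1 < F ((u ∘ φ) n) :=
        htend.eventually (hFlsc ustar _ (by linarith))
      have hsmall : ∀ᶠ n in Filter.atTop,
          γ (φ n) * (F u₀ - F ustar + 1) < c - E u₀ := by
        have ht : Filter.Tendsto (fun n => γ (φ n) * (F u₀ - F ustar + 1))
            Filter.atTop (nhds 0) := by
          simpa using hγφ.mul_const (F u₀ - F ustar + 1)
        exact ht.eventually_lt_const (by linarith)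
      obtain ⟨n, h1, h2, h3⟩ := (hE.and (hF.and hsmall)).exists
      have hm := hmin (φ n) u₀
      have hγn := hγpos (φ n)
      have h4 : γ (φ n) * (F ustar - 1) < γ (φ n) * F (u (φ n)) :=
        mul_lt_mul_of_pos_left h2 hγn
      have hexp : γ (φ n) * (F u₀ - F ustar + 1)
          = γ (φ n) * F u₀ - γ (φ n) * (F ustar - 1) := by ring
      simp only [Function.comp] at h1
      linarith
    exact key.trans (hu₀ v)
  · intro v hv
    apply lsc_le_of_eventually_le hFlsc htend (Filter.Eventually.of_forall ?_)
    intro n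
    have hm := hmin (φ n) v
    have hEv := hv (u (φ n))
    have hγn := hγpos (φ n)
    have hle : γ (φ n) * F (u (φ n)) ≤ γ (φ n) * F v := by linarith
    exact le_of_mul_le_mul_left hle hγn
end

section
/- Fix α > 0 and a dimension d ≥ 1. Let Φ : ℝᵈ × ℝ → ℝ and Φ̄ : ℝ → ℝ be continuous, and let v : ℝᵈ × ℝ → ℝᵈ be continuously differentiable and satisfy ∂ₜ v(x,t) + (v(x,t) · ∇ₓ) v(x,t) = (1/α)(Φ(x,t) − Φ̄(t)) v(x,t) for all (x,t). Let z : ℝ → ℝᵈ be differentiable with z′(t) = v(z(t), t) for all t and z(0) = x₀, and let w : ℝ → ℝ be differentiable with w′(t) = −(1/α)(Φ(z(t), t) − Φ̄(t)) w(t) for all t. Then the vector v(z(t), t) · w(t) is constant in t; that is, v(z(t), t) · w(t) = v(x₀, 0) · w(0) for all t ≥ 0. -/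
/-! Along a characteristic `z' = v(z, t)`, the chain rule turns the transport equation
`∂ₜv + (v·∇ₓ)v = a v` into the linear ODE `(v(z t, t))' = a(t) v(z t, t)`, while the weight
solves `w' = -a w`. The two growth rates cancel in the derivative of `w • v(z, ·)`, which
therefore vanishes. -/

theorem DifferentiableAt.hasDerivAt_comp_prodMk_id {E F : Type*} [NormedAddCommGroup E]
    [NormedSpace ℝ E] [NormedAddCommGroup F] [NormedSpace ℝ F] {v : E × ℝ → F} {z : ℝ → E}
    {z' : E} {t : ℝ}
    (hv : DifferentiableAt ℝ v (z t, t)) (hz : HasDerivAt z z' t) :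
    HasDerivAt (fun s => v (z s, s)) (fderiv ℝ v (z t, t) (z', 1)) t :=
  hv.hasFDerivAt.comp_hasDerivAt (f := fun s => (z s, s)) t (hz.prodMk (hasDerivAt_id t))

theorem smul_eq_of_hasDerivAt_of_hasDerivAt_neg {F : Type*} [NormedAddCommGroup F]
    [NormedSpace ℝ F] {a w : ℝ → ℝ} {g : ℝ → F}
    (hw : ∀ t, HasDerivAt w (-a t * w t) t) (hg : ∀ t, HasDerivAt g (a t • g t) t)
    (s t : ℝ) :
    w t • g t = w s • g s := by
  have hderiv : ∀ t, HasDerivAt (fun s => w s • g s) 0 t := fun t =>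
    ((hw t).smul (hg t)).congr_deriv (by rw [smul_smul]; module)
  exact is_const_of_deriv_eq_zero (fun t => (hderiv t).differentiableAt)
    (fun t => (hderiv t).deriv) t s

theorem velocity_weight_product_constant_general
    (α : ℝ) (d : ℕ)
    (Φ : EuclideanSpace ℝ (Fin d) × ℝ → ℝ)
    (Φbar : ℝ → ℝ)
    (v : EuclideanSpace ℝ (Fin d) × ℝ → EuclideanSpace ℝ (Fin d))
    (hv : ContDiff ℝ 1 v)
    (hpde : ∀ p : EuclideanSpace ℝ (Fin d) × ℝ,
      fderiv ℝ v p (v p, 1) = ((1 / α) * (Φ p - Φbar p.2)) • v p)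
    (z : ℝ → EuclideanSpace ℝ (Fin d)) (x₀ : EuclideanSpace ℝ (Fin d))
    (hz : ∀ t, HasDerivAt z (v (z t, t)) t) (hz0 : z 0 = x₀)
    (w : ℝ → ℝ) (hw : Differentiable ℝ w)
    (hwode : ∀ t, deriv w t = -(1 / α) * (Φ (z t, t) - Φbar t) * w t) :
    ∀ t ≥ (0 : ℝ), w t • v (z t, t) = w 0 • v (x₀, 0) := by
  intro t _
  set a : ℝ → ℝ := fun s => (1 / α) * (Φ (z s, s) - Φbar s)
  have hvelocity : ∀ s, HasDerivAt (fun s => v (z s, s)) (a s • v (z s, s)) s := fun s => by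
    simpa only [hpde] using
      (hv.differentiable one_ne_zero _).hasDerivAt_comp_prodMk_id (hz s)
  have hweight : ∀ s, HasDerivAt w (-a s * w s) s := fun s => by
    simpa only [a, hwode, neg_mul] using (hw s).hasDerivAt
  simpa only [hz0] using smul_eq_of_hasDerivAt_of_hasDerivAt_neg hweight hvelocity 0 t

/-- Combination of parts (i) and (ii) of the theorem in Section 3.3: the
product of the particle velocity and the particle weight is constant along
each trajectory, i.e. `v(z(t), t) w(t) = v(x₀, 0) w(0)`. -/
theorem velocity_weight_product_constant
    (α : ℝ) (hα : 0 < α) (d : ℕ) (hd : 1 ≤ d)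
    (Φ : EuclideanSpace ℝ (Fin d) × ℝ → ℝ) (hΦ : Continuous Φ)
    (Φbar : ℝ → ℝ) (hΦbar : Continuous Φbar)
    (v : EuclideanSpace ℝ (Fin d) × ℝ → EuclideanSpace ℝ (Fin d))
    (hv : ContDiff ℝ 1 v)
    (hpde : ∀ p : EuclideanSpace ℝ (Fin d) × ℝ,
      fderiv ℝ v p (v p, 1) = ((1 / α) * (Φ p - Φbar p.2)) • v p)
    (z : ℝ → EuclideanSpace ℝ (Fin d)) (x₀ : EuclideanSpace ℝ (Fin d))
    (hz : ∀ t, HasDerivAt z (v (z t, t)) t) (hz0 : z 0 = x₀)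
    (w : ℝ → ℝ) (hw : Differentiable ℝ w)
    (hwode : ∀ t, deriv w t = -(1 / α) * (Φ (z t, t) - Φbar t) * w t) :
    ∀ t ≥ (0 : ℝ), w t • v (z t, t) = w 0 • v (x₀, 0) :=
  velocity_weight_product_constant_general α d Φ Φbar v hv hpde z x₀ hz hz0 w hw hwode
end

section
/- Fix α > 0 and a dimension d ≥ 1. Let Φ : ℝᵈ × ℝ → ℝ and Φ̄ : ℝ → ℝ be continuous, and let v : ℝᵈ × ℝ → ℝᵈ be continuously differentiable and satisfy ∂ₜ v(x,t) + (v(x,t) · ∇ₓ) v(x,t) = (1/α)(Φ(x,t) − Φ̄(t)) v(x,t) for all (x,t). Let z : ℝ → ℝᵈ be differentiable with z′(t) = v(z(t), t) for all t and z(0) = x₀. Then for all t ≥ 0, z(t) = x₀ + (∫₀ᵗ exp((1/α) ∫₀ˢ (Φ(z(r), r) − Φ̄(r)) dr) ds) · v(x₀, 0); in particular, the trajectory {z(t) : t ≥ 0} is contained in the ray {x₀ + λ · v(x₀, 0) : λ ≥ 0}, so the particle moves in a straight line. -/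
/-!
Along a characteristic `z' = v(z, t)` the chain rule turns the transport equation into the
scalar linear ODE `w' = c(t) w` for the velocity `w(t) = v(z(t), t)`, with
`c(t) = (Φ(z(t), t) - Φ̄(t)) / α`. Hence `exp(-∫₀ᵗ c) • w` is constant, so the velocity keeps
the direction of `v(x₀, 0)` and only its length `exp(∫₀ᵗ c)` varies; integrating `z' = w`
gives the ray.
-/

open intervalIntegral

section

variable {E : Type*} [NormedAddCommGroup E] [NormedSpace ℝ E]

theorem eq_of_hasDerivAt_eq_zero {u : ℝ → E} (hu : ∀ t, HasDerivAt u 0 t) (t : ℝ) :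
    u t = u 0 :=
  is_const_of_deriv_eq_zero (fun s => (hu s).differentiableAt) (fun s => (hu s).deriv) t 0

theorem eq_exp_integral_smul_of_hasDerivAt_smul {c : ℝ → ℝ} {w : ℝ → E} (hc : Continuous c)
    (hw : ∀ t, HasDerivAt w (c t • w t) t) (t : ℝ) :
    w t = Real.exp (∫ r in (0 : ℝ)..t, c r) • w 0 := by
  set g : ℝ → ℝ := fun t => ∫ r in (0 : ℝ)..t, c r
  have hconst : ∀ t, HasDerivAt (fun t => Real.exp (-g t) • w t) 0 t := by
    intro t
    have h := ((hc.integral_hasStrictDerivAt 0 t).hasDerivAt.neg.exp).smul (hw t)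
    rwa [smul_smul, ← add_smul, mul_neg, add_neg_cancel, zero_smul] at h
  have h := eq_of_hasDerivAt_eq_zero hconst t
  have hg0 : g 0 = 0 := integral_same
  rw [hg0, neg_zero, Real.exp_zero, one_smul] at h
  rw [← h, smul_smul, ← Real.exp_add, add_neg_cancel, Real.exp_zero, one_smul]

theorem eq_add_integral_smul_of_hasDerivAt_smul_const {a : ℝ → ℝ} {z : ℝ → E} {e : E}
    (ha : Continuous a) (hz : ∀ t, HasDerivAt z (a t • e) t) (t : ℝ) :
    z t = z 0 + (∫ s in (0 : ℝ)..t, a s) • e := by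
  have hconst : ∀ t, HasDerivAt (fun t => z t - (∫ s in (0 : ℝ)..t, a s) • e) 0 t := fun t => by
    simpa only [sub_self] using
      (hz t).fun_sub ((ha.integral_hasStrictDerivAt 0 t).hasDerivAt.smul_const e)
  have h := eq_of_hasDerivAt_eq_zero hconst t
  rw [integral_same, zero_smul, sub_zero] at h
  rw [← h, sub_add_cancel]

variable {F : Type*} [NormedAddCommGroup F] [NormedSpace ℝ F]

theorem hasDerivAt_comp_characteristic {v : E × ℝ → F} {z : ℝ → E} {z' : E} {t : ℝ}
    (hv : DifferentiableAt ℝ v (z t, t)) (hz : HasDerivAt z z' t) :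
    HasDerivAt (fun s => v (z s, s)) (fderiv ℝ v (z t, t) (z', 1)) t :=
  hv.hasFDerivAt.comp_hasDerivAt (f := fun s => (z s, s)) t (hz.prodMk (hasDerivAt_id t))

end

theorem particles_move_in_straight_lines_general
    (α : ℝ) (d : ℕ)
    (Φ : EuclideanSpace ℝ (Fin d) × ℝ → ℝ) (hΦ : Continuous Φ)
    (Φbar : ℝ → ℝ) (hΦbar : Continuous Φbar)
    (v : EuclideanSpace ℝ (Fin d) × ℝ → EuclideanSpace ℝ (Fin d))
    (hv : ContDiff ℝ 1 v)
    (hpde : ∀ p : EuclideanSpace ℝ (Fin d) × ℝ,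
      fderiv ℝ v p (v p, 1) = ((1 / α) * (Φ p - Φbar p.2)) • v p)
    (z : ℝ → EuclideanSpace ℝ (Fin d)) (x₀ : EuclideanSpace ℝ (Fin d))
    (hz : ∀ t, HasDerivAt z (v (z t, t)) t) (hz0 : z 0 = x₀) :
    (∀ t ≥ (0 : ℝ), z t = x₀ +
        (∫ s in (0 : ℝ)..t,
          Real.exp ((1 / α) * ∫ r in (0 : ℝ)..s, (Φ (z r, r) - Φbar r)))
          • v (x₀, 0)) ∧
      ∀ t ≥ (0 : ℝ), ∃ l : ℝ, 0 ≤ l ∧ z t = x₀ + l • v (x₀, 0) := by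
  have hzc : Continuous z := continuous_iff_continuousAt.2 fun t => (hz t).continuousAt
  set c : ℝ → ℝ := fun t => (1 / α) * (Φ (z t, t) - Φbar t)
  have hc : Continuous c := continuous_const.mul ((hΦ.comp (hzc.prodMk continuous_id)).sub hΦbar)
  have hvelocity : ∀ t, HasDerivAt (fun t => v (z t, t)) (c t • v (z t, t)) t := fun t => by
    simpa only [hpde] using
      hasDerivAt_comp_characteristic ((hv.differentiable one_ne_zero) (z t, t)) (hz t)
  have hspeed : Continuous fun s => Real.exp (∫ r in (0 : ℝ)..s, c r) :=
    Real.continuous_exp.comp (continuous_primitive (fun _ _ => hc.intervalIntegrable _ _) 0)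
  have hray : ∀ t, z t = x₀ + (∫ s in (0 : ℝ)..t, Real.exp (∫ r in (0 : ℝ)..s, c r)) • v (x₀, 0) := by
    intro t
    rw [← hz0]
    refine eq_add_integral_smul_of_hasDerivAt_smul_const hspeed (fun s => ?_) t
    simpa [eq_exp_integral_smul_of_hasDerivAt_smul hc hvelocity s, hz0] using hz s
  refine ⟨fun t _ => by simpa only [c, integral_const_mul] using hray t, fun t ht => ?_⟩
  exact ⟨_, integral_nonneg ht fun s _ => (Real.exp_pos _).le, hray t⟩

/-- The "particles move in straight lines" consequence of part (ii) of the
theorem in Section 3.3: along the characteristics, the trajectory is the ray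
emanating from `x₀` in the direction of the initial velocity `v(x₀, 0)`. -/
theorem particles_move_in_straight_lines
    (α : ℝ) (hα : 0 < α) (d : ℕ) (hd : 1 ≤ d)
    (Φ : EuclideanSpace ℝ (Fin d) × ℝ → ℝ) (hΦ : Continuous Φ)
    (Φbar : ℝ → ℝ) (hΦbar : Continuous Φbar)
    (v : EuclideanSpace ℝ (Fin d) × ℝ → EuclideanSpace ℝ (Fin d))
    (hv : ContDiff ℝ 1 v)
    (hpde : ∀ p : EuclideanSpace ℝ (Fin d) × ℝ,
      fderiv ℝ v p (v p, 1) = ((1 / α) * (Φ p - Φbar p.2)) • v p)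
    (z : ℝ → EuclideanSpace ℝ (Fin d)) (x₀ : EuclideanSpace ℝ (Fin d))
    (hz : ∀ t, HasDerivAt z (v (z t, t)) t) (hz0 : z 0 = x₀) :
    (∀ t ≥ (0 : ℝ), z t = x₀ +
        (∫ s in (0 : ℝ)..t,
          Real.exp ((1 / α) * ∫ r in (0 : ℝ)..s, (Φ (z r, r) - Φbar r)))
          • v (x₀, 0)) ∧
      ∀ t ≥ (0 : ℝ), ∃ l : ℝ, 0 ≤ l ∧ z t = x₀ + l • v (x₀, 0) :=
  particles_move_in_straight_lines_general α d Φ hΦ Φbar hΦbar v hv hpde z x₀ hz hz0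
end
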